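/- Asymptotic Gilbert–Varshamov rate for EA stabilizer codes: if R, ρ, δ are nonnegative reals with R < 1 + ρ - δ·log₂3 - H₂(δ) and 0 < δ < 1/2, then for all sufficiently large n the counting condition (2^{n+⌈Rn⌉-⌊ρn⌋} - 2^{n-⌈Rn⌉-⌊ρn⌋}) · Σ_{j=0}^{⌈δn⌉-1} binom(n,j) 3^j ≤ 4^n - 1 holds, where H₂(x) = -x log₂ x - (1-x) log₂(1-x). -/

import Mathlib

open Finset

/-- The binary entropy function. -/
noncomputable def binEnt (x : ℝ) : ℝ := -x * Real.logb 2 x - (1 - x) * Real.logb 2 (1 - x)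

/-!
The volume of the ball of radius `δn` is bounded by a Chernoff estimate: for `0 < s ≤ 1`,
`∑_{j < m} C(n,j) 3^j ≤ s^{-m} ∑_j C(n,j) (3s)^j = (1 + 3s)^n / s^m`. At the optimal
`s = δ / (3(1 - δ))` the right-hand side with `m ≈ δn` is `2^{n(δ log₂ 3 + H₂(δ))}` up to a
constant, so the left-hand side of the counting condition is `O(bⁿ)` with
`b = 2^{1 + R - ρ + δ log₂ 3 + H₂(δ)} < 4`, which is eventually below `4ⁿ - 1`.
-/

open Filter

theorem sum_range_choose_mul_pow_le (n m : ℕ) {x : ℝ} (hx : 0 ≤ x) :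
    ∑ j ∈ range m, (n.choose j : ℝ) * x ^ j ≤ (1 + x) ^ n := by
  calc ∑ j ∈ range m, (n.choose j : ℝ) * x ^ j
      ≤ ∑ j ∈ range (max m (n + 1)), (n.choose j : ℝ) * x ^ j :=
        sum_le_sum_of_subset_of_nonneg (range_subset_range.2 (le_max_left _ _))
          fun _ _ _ => by positivity
    _ = ∑ j ∈ range (n + 1), (n.choose j : ℝ) * x ^ j := by
        refine (sum_subset (range_subset_range.2 (le_max_right _ _)) fun j _ hj => ?_).symm
        rw [Nat.choose_eq_zero_of_lt (by simpa using hj), Nat.cast_zero, zero_mul]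
    _ = (1 + x) ^ n := by
        rw [add_comm 1 x, add_pow]
        exact sum_congr rfl fun j _ => by rw [one_pow, mul_one, mul_comm]

theorem sum_range_choose_mul_pow_le_div_pow (n m : ℕ) {a s : ℝ} (ha : 0 ≤ a) (hs0 : 0 < s)
    (hs1 : s ≤ 1) :
    ∑ j ∈ range m, (n.choose j : ℝ) * a ^ j ≤ (1 + a * s) ^ n / s ^ m := by
  rw [le_div_iff₀ (by positivity), sum_mul]
  refine (sum_le_sum fun j hj => ?_).trans (sum_range_choose_mul_pow_le n m (by positivity))
  rw [mul_pow, ← mul_assoc]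
  exact mul_le_mul_of_nonneg_left (pow_le_pow_of_le_one hs0.le hs1 (mem_range.1 hj).le)
    (by positivity)

theorem sum_range_ceil_choose_mul_pow_le_div_rpow (n : ℕ) {a s t : ℝ} (ha : 0 ≤ a)
    (hs0 : 0 < s) (hs1 : s ≤ 1) (ht : 0 ≤ t) :
    ∑ j ∈ range ⌈t⌉₊, (n.choose j : ℝ) * a ^ j ≤ (1 + a * s) ^ n / s ^ (t + 1) := by
  refine (sum_range_choose_mul_pow_le_div_pow n _ ha hs0 hs1).trans
    (div_le_div_of_nonneg_left (by positivity) (by positivity) ?_)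
  rw [← Real.rpow_natCast]
  exact Real.rpow_le_rpow_of_exponent_ge hs0 hs1 (Nat.ceil_lt_add_one ht).le

theorem one_add_mul_mul_rpow_neg_eq_two_rpow {a δ : ℝ} (ha : 0 < a) (hδ0 : 0 < δ)
    (hδ1 : δ < 1) :
    (1 + a * (δ / (a * (1 - δ)))) * (δ / (a * (1 - δ))) ^ (-δ)
      = 2 ^ (δ * Real.logb 2 a + binEnt δ) := by
  have h1δ : 0 < 1 - δ := sub_pos.2 hδ1
  have hbase : 1 + a * (δ / (a * (1 - δ))) = (1 - δ)⁻¹ := by field_simp; ring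
  rw [hbase]
  refine (Real.rpow_logb two_pos (by norm_num) (by positivity)).symm.trans (congrArg _ ?_)
  rw [Real.logb_mul (by positivity) (by positivity), Real.logb_inv,
    Real.logb_rpow_eq_mul_logb_of_pos (by positivity), Real.logb_div hδ0.ne' (by positivity),
    Real.logb_mul ha.ne' h1δ.ne', binEnt]
  ring

theorem eventually_mul_pow_le_pow_sub_one {b c : ℝ} (C : ℝ) (hb : 0 ≤ b) (hbc : b < c)
    (hc : 1 < c) : ∀ᶠ n : ℕ in atTop, C * b ^ n ≤ c ^ n - 1 := by
  have hc0 : 0 < c := one_pos.trans hc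
  have hlim : Tendsto (fun n : ℕ => C * (b / c) ^ n + c⁻¹ ^ n) atTop (nhds 0) := by
    simpa using ((tendsto_pow_atTop_nhds_zero_of_lt_one (by positivity)
      ((div_lt_one hc0).2 hbc)).const_mul C).add
      (tendsto_pow_atTop_nhds_zero_of_lt_one (by positivity) (inv_lt_one_of_one_lt₀ hc))
  filter_upwards [hlim.eventually_lt_const one_pos] with n hn
  have hcn : 0 < c ^ n := by positivity
  have := mul_lt_mul_of_pos_right hn hcn
  rw [add_mul, div_pow, inv_pow, mul_assoc, div_mul_cancel₀ _ hcn.ne',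
    inv_mul_cancel₀ hcn.ne', one_mul] at this
  linarith

theorem ea_gv_asymptotic_general (R ρ δ : ℝ) (hδ0 : 0 < δ) (hδ1 : δ < 1 / 2)
    (hrate : R < 1 + ρ - δ * Real.logb 2 3 - binEnt δ) :
    ∃ N : ℕ, ∀ n : ℕ, N ≤ n →
      ((2 : ℝ) ^ ((n : ℤ) + ⌈R * n⌉ - ⌊ρ * n⌋) - (2 : ℝ) ^ ((n : ℤ) - ⌈R * n⌉ - ⌊ρ * n⌋)) *
          ∑ j ∈ Finset.range ⌈δ * n⌉₊, (n.choose j : ℝ) * 3 ^ j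
        ≤ 4 ^ n - 1 := by
  set s : ℝ := δ / (3 * (1 - δ))
  have hs0 : 0 < s := div_pos hδ0 (by linarith)
  have hs1 : s ≤ 1 := (div_le_one (by linarith)).2 (by linarith)
  set b : ℝ := 2 ^ (1 + R - ρ) * ((1 + 3 * s) * s ^ (-δ))
  have hb4 : b < 4 := by
    simp only [b, s]
    rw [one_add_mul_mul_rpow_neg_eq_two_rpow three_pos hδ0 (by linarith),
      ← Real.rpow_add two_pos]
    calc _ < (2 : ℝ) ^ (2 : ℝ) := Real.rpow_lt_rpow_of_exponent_lt one_lt_two (by linarith)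
      _ = 4 := by norm_num
  obtain ⟨N, hN⟩ := eventually_atTop.1
    (eventually_mul_pow_le_pow_sub_one (4 / s) (by positivity) hb4 (by norm_num))
  refine ⟨N, fun n hn => le_trans ?_ (hN n hn)⟩
  have hexp :
      (2 : ℝ) ^ ((n : ℤ) + ⌈R * n⌉ - ⌊ρ * n⌋) ≤ 2 ^ ((1 + R - ρ) * n + 2) := by
    rw [← Real.rpow_intCast]
    refine Real.rpow_le_rpow_of_exponent_le one_le_two ?_
    push_cast
    linarith [Int.ceil_lt_add_one (R * n), Int.sub_one_lt_floor (ρ * n)]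
  calc _ ≤ (2 : ℝ) ^ ((n : ℤ) + ⌈R * n⌉ - ⌊ρ * n⌋) *
          ∑ j ∈ Finset.range ⌈δ * n⌉₊, (n.choose j : ℝ) * 3 ^ j :=
        mul_le_mul_of_nonneg_right (sub_le_self _ (by positivity)) (by positivity)
    _ ≤ 2 ^ ((1 + R - ρ) * n + 2) * ((1 + 3 * s) ^ n / s ^ (δ * n + 1)) :=
        mul_le_mul hexp (sum_range_ceil_choose_mul_pow_le_div_rpow n (by norm_num) hs0 hs1
          (by positivity)) (by positivity) (by positivity)
    _ = 4 / s * b ^ n := by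
        rw [mul_pow, mul_pow, ← Real.rpow_natCast (2 ^ (1 + R - ρ)),
          ← Real.rpow_mul two_pos.le, ← Real.rpow_natCast (s ^ (-δ)), ← Real.rpow_mul hs0.le,
          Real.rpow_add two_pos, Real.rpow_two, Real.rpow_add_one hs0.ne', neg_mul,
          Real.rpow_neg hs0.le]
        field_simp
        ring

/-- Asymptotic Gilbert–Varshamov rate for EA stabilizer codes: if
`R < 1 + ρ - δ log₂ 3 - H₂(δ)` then the counting condition of Theorem 2 holds for all
sufficiently large `n`. -/
theorem ea_gv_asymptotic (R ρ δ : ℝ) (hR : 0 ≤ R) (hρ : 0 ≤ ρ)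
    (hδ0 : 0 < δ) (hδ1 : δ < 1 / 2)
    (hrate : R < 1 + ρ - δ * Real.logb 2 3 - binEnt δ) :
    ∃ N : ℕ, ∀ n : ℕ, N ≤ n →
      ((2 : ℝ) ^ ((n : ℤ) + ⌈R * n⌉ - ⌊ρ * n⌋) - (2 : ℝ) ^ ((n : ℤ) - ⌈R * n⌉ - ⌊ρ * n⌋)) *
          ∑ j ∈ Finset.range ⌈δ * n⌉₊, (n.choose j : ℝ) * 3 ^ j
        ≤ 4 ^ n - 1 :=
  ea_gv_asymptotic_general R ρ δ hδ0 hδ1 hrate
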